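/- For the (m+1)-dimensional irreducible representation φ of sl(2,ℂ) and all z₀, z₁, z₂, z₃ ∈ ℂ: det(z₀I + z₁φ(h) + z₂φ(e₁) + z₃φ(e₂)) equals z₀·∏_{l=1}^{m/2}(z₀² - 4l²(z₁² + z₂z₃)) when m is even, and ∏_{l=0}^{(m-1)/2}(z₀² - (2l+1)²(z₁² + z₂z₃)) when m is odd. -/

import Mathlib

open Matrix

/-- `φ(h)` for the irreducible representation of highest weight `m`. -/
def phiH (m : ℕ) : Matrix (Fin (m + 1)) (Fin (m + 1)) ℂ :=
  Matrix.diagonal fun i => (m : ℂ) - 2 * (i : ℕ)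

/-- `φ(e₁)`: `φ(e₁) v_i = (m - i + 1) v_{i-1}`. -/
def phiE (m : ℕ) : Matrix (Fin (m + 1)) (Fin (m + 1)) ℂ :=
  Matrix.of fun i j => if (i : ℕ) + 1 = (j : ℕ) then (m : ℂ) - (j : ℕ) + 1 else 0

/-- `φ(e₂)`: `φ(e₂) v_i = (i + 1) v_{i+1}`. -/
def phiF (m : ℕ) : Matrix (Fin (m + 1)) (Fin (m + 1)) ℂ :=
  Matrix.of fun i j => if (j : ℕ) + 1 = (i : ℕ) then ((j : ℕ) + 1 : ℂ) else 0

/-!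
Conjugation by `exp (c • φ(e₂))` fixes `φ(e₂)` and sends `φ(h) ↦ φ(h) + 2c φ(e₂)` and
`φ(e₁) ↦ φ(e₁) - c φ(h) - c² φ(e₂)`; this uses only `[h, e₂] = -2e₂`, `[e₁, e₂] = h` and the
nilpotency of `φ(e₂)`. If `z₂ ≠ 0`, choosing `c` as a root of `z₃ + 2cz₁ - c²z₂` removes the
`φ(e₂)`-term and leaves the upper triangular matrix `z₀ + u φ(h) + z₂ φ(e₁)` with
`u² = z₁² + z₂z₃`; if `z₂ = 0` the matrix is lower triangular with `u = z₁`. Either way the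
determinant is `∏ (z₀ + u w)` over the weights `w = m, m - 2, …, -m`, and pairing `w` with `-w`
gives the stated products.
-/

open Finset
open scoped Nat

section SlTwoRelations

variable {R : Type*} [Ring R] {h e f : R}

theorem pow_mul_of_lie_eq (hf : ⁅h, f⁆ = -(2 • f)) (k : ℕ) :
    f ^ k * h = h * f ^ k + (2 * k) • f ^ k := by
  have hfh : f * h = h * f + 2 • f := by
    rw [Ring.lie_def] at hf
    rw [← sub_eq_iff_eq_add', ← neg_sub, hf, neg_neg]
  induction k with
  | zero => simp
  | succ k ih =>
    rw [pow_succ, mul_assoc, hfh, mul_add, ← mul_assoc, ih]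
    simp only [add_mul, mul_smul_comm, smul_mul_assoc, mul_assoc, ← pow_succ]
    module

theorem mul_pow_succ_of_lie_eq (hf : ⁅h, f⁆ = -(2 • f)) (he : ⁅e, f⁆ = h) (k : ℕ) :
    e * f ^ (k + 1) = f ^ (k + 1) * e + (k + 1) • f ^ k * h - ((k + 1) * k) • f ^ k := by
  rw [Ring.lie_def, sub_eq_iff_eq_add] at hf he
  induction k with
  | zero => simp [he, add_comm]
  | succ k ih =>
    rw [pow_succ, ← mul_assoc, ih]
    simp only [add_mul, sub_mul, mul_assoc, smul_mul_assoc, he, hf, mul_add, ← pow_succ,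
      mul_smul_comm, mul_neg]
    simp only [← mul_assoc, ← pow_succ]
    module

end SlTwoRelations

theorem succ_mul_div_factorial_succ {K : Type*} [Field K] [CharZero K] (c : K) (k : ℕ) :
    (k + 1) * (c ^ (k + 1) / (k + 1)!) = c * (c ^ k / k !) := by
  rw [Nat.factorial_succ]
  push_cast
  field_simp
  ring

theorem commute_exp_of_commute {A : Type*} [Ring A] [Module ℚ A] {a b : A} (h : Commute a b) :
    Commute a (IsNilpotent.exp b) :=
  Commute.sum_right _ _ _ fun k _ => (h.pow_right k).smul_right _

section NilpotentExp

variable {K A : Type*} [Field K] [CharZero K] [Ring A] [Algebra K A] [Module ℚ A]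
  {h e f : A} {N : ℕ}

theorem exp_smul_eq_sum (hf : f ^ N = 0) (c : K) :
    IsNilpotent.exp (c • f) = ∑ k ∈ range N, (c ^ k / k !) • f ^ k := by
  rw [IsNilpotent.exp_eq_sum (by rw [smul_pow, hf, smul_zero])]
  refine sum_congr rfl fun k _ => ?_
  rw [smul_pow, ← Rat.cast_smul_eq_qsmul K, smul_smul]
  push_cast
  ring_nf

theorem sum_natCast_mul_smul_pow (hf : f ^ N = 0) (c : K) :
    ∑ k ∈ range (N + 1), (k * (c ^ k / k !)) • f ^ k = c • (f * IsNilpotent.exp (c • f)) := by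
  rw [sum_range_succ', exp_smul_eq_sum hf, mul_sum, smul_sum]
  simp only [Nat.cast_zero, zero_mul, zero_smul, add_zero]
  refine sum_congr rfl fun k _ => ?_
  rw [mul_smul_comm, smul_smul, ← pow_succ', Nat.cast_succ, succ_mul_div_factorial_succ]

theorem exp_smul_mul_of_lie_eq (hf : ⁅h, f⁆ = -(2 • f)) (hN : f ^ N = 0) (c : K) :
    IsNilpotent.exp (c • f) * h = (h + (2 * c) • f) * IsNilpotent.exp (c • f) := by
  calc IsNilpotent.exp (c • f) * h
      = h * IsNilpotent.exp (c • f) +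
          (2 : K) • ∑ k ∈ range (N + 1), (k * (c ^ k / k !)) • f ^ k := by
        rw [exp_smul_eq_sum (pow_eq_zero_of_le N.le_succ hN), sum_mul, mul_sum, smul_sum,
          ← sum_add_distrib]
        refine sum_congr rfl fun k _ => ?_
        rw [smul_mul_assoc, pow_mul_of_lie_eq hf, ← Nat.cast_smul_eq_nsmul K, mul_smul_comm]
        push_cast
        module
    _ = (h + (2 * c) • f) * IsNilpotent.exp (c • f) := by
        rw [sum_natCast_mul_smul_pow hN, add_mul, smul_mul_assoc, smul_smul]

theorem exp_smul_mul_of_lie_eq_of_lie_eq (hf : ⁅h, f⁆ = -(2 • f)) (he : ⁅e, f⁆ = h)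
    (hN : f ^ N = 0) (c : K) :
    IsNilpotent.exp (c • f) * e = (e - c • h - c ^ 2 • f) * IsNilpotent.exp (c • f) := by
  set E := IsNilpotent.exp (c • f) with hE
  have hshift :
      e * E = E * e + c • ∑ k ∈ range (N + 1), (c ^ k / k !) • (f ^ k * h - k • f ^ k) := by
    rw [hE, exp_smul_eq_sum (pow_eq_zero_of_le (by omega : N ≤ N + 2) hN), mul_sum, sum_mul,
      sum_range_succ' _ (N + 1), sum_range_succ' _ (N + 1), smul_sum, add_right_comm,
      ← sum_add_distrib]
    simp only [pow_zero, Nat.factorial_zero, Nat.cast_one, div_one, one_smul, mul_one, one_mul]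
    congr 1
    refine sum_congr rfl fun k _ => ?_
    rw [mul_smul_comm, mul_pow_succ_of_lie_eq hf he, smul_mul_assoc, ← Nat.cast_smul_eq_nsmul K,
      ← Nat.cast_smul_eq_nsmul K, ← Nat.cast_smul_eq_nsmul K, smul_mul_assoc]
    push_cast
    linear_combination (norm := module) (succ_mul_div_factorial_succ c k) • (f ^ k * h - k • f ^ k)
  have hsum : ∑ k ∈ range (N + 1), (c ^ k / k !) • (f ^ k * h - k • f ^ k)
      = E * h - c • (f * E) := by
    rw [← sum_natCast_mul_smul_pow hN, hE, exp_smul_eq_sum (pow_eq_zero_of_le N.le_succ hN),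
      sum_mul, ← sum_sub_distrib]
    refine sum_congr rfl fun k _ => ?_
    rw [smul_sub, smul_mul_assoc, ← Nat.cast_smul_eq_nsmul K, smul_smul, mul_comm]
  calc E * e = e * E - c • (E * h - c • (f * E)) := by rw [hshift, hsum]; abel
    _ = (e - c • h - c ^ 2 • f) * E := by
      rw [exp_smul_mul_of_lie_eq hf hN]
      simp only [sub_mul, add_mul, smul_mul_assoc]
      module

end NilpotentExp

section WeightProduct

variable {R : Type*} [CommRing R] (z₀ u : R)

def weightProd (n : ℕ) : R :=
  ∏ i ∈ range (n + 1), (z₀ + u * (n - 2 * i))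

theorem weightProd_add_two (n : ℕ) :
    weightProd z₀ u (n + 2) = (z₀ ^ 2 - ((n : R) + 2) ^ 2 * u ^ 2) * weightProd z₀ u n := by
  rw [weightProd, prod_range_succ, prod_range_succ', weightProd]
  have hshift (i : ℕ) : z₀ + u * (((n + 2 : ℕ) : R) - 2 * ((i + 1 : ℕ) : R)) =
      z₀ + u * (n - 2 * i) := by
    push_cast
    ring
  simp only [hshift]
  push_cast
  ring

theorem weightProd_two_mul (k : ℕ) :
    weightProd z₀ u (2 * k) = z₀ * ∏ l ∈ range k, (z₀ ^ 2 - 4 * ((l : R) + 1) ^ 2 * u ^ 2) := by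
  induction k with
  | zero => simp [weightProd]
  | succ k ih =>
    rw [mul_add_one, weightProd_add_two, ih, prod_range_succ]
    push_cast
    ring

theorem weightProd_two_mul_add_one (k : ℕ) :
    weightProd z₀ u (2 * k + 1) =
      ∏ l ∈ range (k + 1), (z₀ ^ 2 - (2 * (l : R) + 1) ^ 2 * u ^ 2) := by
  induction k with
  | zero =>
    simp [weightProd, prod_range_succ]
    ring
  | succ k ih =>
    rw [show 2 * (k + 1) + 1 = 2 * k + 1 + 2 by ring, weightProd_add_two, ih,
      prod_range_succ _ (k + 1)]
    push_cast
    ring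

end WeightProduct

theorem lie_phiH_phiF (m : ℕ) : ⁅phiH m, phiF m⁆ = -(2 • phiF m) := by
  rw [Ring.lie_def]
  ext i j
  rw [Matrix.sub_apply, phiH, diagonal_mul, mul_diagonal, Matrix.neg_apply, Matrix.smul_apply,
    phiF, of_apply]
  split_ifs with h
  · rw [← h]; push_cast; ring
  · simp

theorem lie_phiE_phiF (m : ℕ) : ⁅phiE m, phiF m⁆ = phiH m := by
  rw [Ring.lie_def]
  ext ⟨i, hi⟩ ⟨j, hj⟩
  rw [Matrix.sub_apply, mul_apply, mul_apply]
  simp only [phiE, phiF, phiH, of_apply, diagonal_apply, ite_mul, mul_ite, zero_mul, mul_zero]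
  rw [Fin.sum_univ_eq_sum_range (fun n => if j + 1 = n then if i + 1 = n then
      ((m : ℂ) - n + 1) * (j + 1) else 0 else 0),
    Fin.sum_univ_eq_sum_range (fun n => if n + 1 = j then if n + 1 = i then
      ((n : ℂ) + 1) * ((m : ℂ) - j + 1) else 0 else 0)]
  rcases j with _ | j <;> simp only [sum_ite_eq, Nat.add_right_cancel_iff, Nat.succ_ne_zero,
    if_false, sum_const_zero, sum_ite_eq', mem_range, Fin.mk.injEq]
  all_goals split_ifs <;> subst_vars <;> first | omega | (push_cast; ring1) | skip
  -- the last row `i = m`, where `phiE m` has no entry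
  · obtain rfl : m = 0 := by omega
    simp
  · obtain rfl : m = j + 1 := by omega
    push_cast
    ring

theorem phiF_pow_apply_eq_zero (m : ℕ) {k : ℕ} {i j : Fin (m + 1)} (h : (i : ℕ) < j + k) :
    (phiF m ^ k) i j = 0 := by
  induction k generalizing i with
  | zero => exact one_apply_ne (by omega)
  | succ k ih =>
    rw [pow_succ', mul_apply]
    refine sum_eq_zero fun l _ => ?_
    by_cases hl : (l : ℕ) + 1 = i
    · rw [ih (by omega), mul_zero]
    · rw [phiF, of_apply, if_neg hl, zero_mul]

theorem phiF_pow_eq_zero (m : ℕ) : phiF m ^ (m + 1) = 0 := by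
  ext i j
  exact phiF_pow_apply_eq_zero m (by omega)

theorem det_eq_of_mul_eq_mul {n R : Type*} [Fintype n] [DecidableEq n] [CommRing R]
    {L M M' : Matrix n n R} (hL : IsUnit L) (h : L * M = M' * L) : M.det = M'.det := by
  have h' := congrArg det h
  rw [det_mul, det_mul, mul_comm] at h'
  exact ((isUnit_iff_isUnit_det L).mp hL).mul_right_cancel h'

def pencil (m : ℕ) (z₀ z₁ z₂ z₃ : ℂ) : Matrix (Fin (m + 1)) (Fin (m + 1)) ℂ :=
  z₀ • 1 + z₁ • phiH m + z₂ • phiE m + z₃ • phiF m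

theorem exp_smul_phiF_mul_pencil (m : ℕ) (c z₀ z₁ z₂ z₃ : ℂ) :
    IsNilpotent.exp (c • phiF m) * pencil m z₀ z₁ z₂ z₃ =
      pencil m z₀ (z₁ - c * z₂) z₂ (z₃ + 2 * c * z₁ - c ^ 2 * z₂) *
        IsNilpotent.exp (c • phiF m) := by
  have hH := exp_smul_mul_of_lie_eq (lie_phiH_phiF m) (phiF_pow_eq_zero m) c
  have hE := exp_smul_mul_of_lie_eq_of_lie_eq (lie_phiH_phiF m) (lie_phiE_phiF m)
    (phiF_pow_eq_zero m) c
  have hF := (commute_exp_of_commute ((Commute.refl (phiF m)).smul_right c)).eq.symm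
  simp only [pencil, mul_add, add_mul, sub_mul, mul_smul_comm, smul_mul_assoc, mul_one, one_mul,
    hH, hE, hF]
  module

theorem prod_pencil_apply_self (m : ℕ) (z₀ z₁ z₂ z₃ : ℂ) :
    ∏ i, pencil m z₀ z₁ z₂ z₃ i i = weightProd z₀ z₁ m := by
  rw [weightProd, ← Fin.prod_univ_eq_prod_range]
  refine prod_congr rfl fun i _ => ?_
  simp [pencil, phiH, phiE, phiF]

theorem isUpperTriangular_pencil (m : ℕ) (z₀ z₁ z₂ : ℂ) :
    (pencil m z₀ z₁ z₂ 0).IsUpperTriangular := by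
  intro i j hij
  have hij : (j : ℕ) < i := hij
  simp [pencil, phiH, phiE, Fin.ne_of_gt hij, show (i : ℕ) + 1 ≠ j by omega]

theorem isLowerTriangular_pencil (m : ℕ) (z₀ z₁ z₃ : ℂ) :
    (pencil m z₀ z₁ 0 z₃).IsLowerTriangular := by
  intro i j hij
  have hij : (i : ℕ) < j := hij
  simp [pencil, phiH, phiF, Fin.ne_of_lt hij, show (j : ℕ) + 1 ≠ i by omega]

theorem exists_det_pencil_eq_weightProd (m : ℕ) (z₀ z₁ z₂ z₃ : ℂ) :
    ∃ u : ℂ, u ^ 2 = z₁ ^ 2 + z₂ * z₃ ∧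
      (pencil m z₀ z₁ z₂ z₃).det = weightProd z₀ u m := by
  by_cases hz₂ : z₂ = 0
  · subst hz₂
    refine ⟨z₁, by ring, ?_⟩
    rw [det_of_isLowerTriangular _ (isLowerTriangular_pencil m z₀ z₁ z₃), prod_pencil_apply_self]
  obtain ⟨u, hu⟩ := IsAlgClosed.exists_pow_nat_eq (z₁ ^ 2 + z₂ * z₃) two_pos
  set c := (z₁ + u) / z₂
  have hcz : c * z₂ = z₁ + u := div_mul_cancel₀ _ hz₂
  have hc : z₃ + 2 * c * z₁ - c ^ 2 * z₂ = 0 := by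
    refine (mul_eq_zero.mp ?_).resolve_left hz₂
    linear_combination (z₁ - u - c * z₂) * hcz - hu
  have hconj := exp_smul_phiF_mul_pencil m c z₀ z₁ z₂ z₃
  rw [hc, show z₁ - c * z₂ = -u by rw [hcz]; ring] at hconj
  refine ⟨-u, by rw [neg_sq, hu], ?_⟩
  rw [det_eq_of_mul_eq_mul (IsNilpotent.isUnit_exp ⟨m + 1, by
    rw [smul_pow, phiF_pow_eq_zero, smul_zero]⟩) hconj,
    det_of_isUpperTriangular (isUpperTriangular_pencil m z₀ (-u) z₂), prod_pencil_apply_self]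

theorem char_poly_irreducible_four_vars (m : ℕ) (z₀ z₁ z₂ z₃ : ℂ) :
    (∀ k : ℕ, m = 2 * k →
      (z₀ • (1 : Matrix (Fin (m + 1)) (Fin (m + 1)) ℂ) + z₁ • phiH m + z₂ • phiE m + z₃ • phiF m).det
        = z₀ * ∏ l ∈ Finset.range k, (z₀ ^ 2 - 4 * ((l : ℂ) + 1) ^ 2 * (z₁ ^ 2 + z₂ * z₃))) ∧
    (∀ k : ℕ, m = 2 * k + 1 →
      (z₀ • (1 : Matrix (Fin (m + 1)) (Fin (m + 1)) ℂ) + z₁ • phiH m + z₂ • phiE m + z₃ • phiF m).det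
        = ∏ l ∈ Finset.range (k + 1), (z₀ ^ 2 - (2 * (l : ℂ) + 1) ^ 2 * (z₁ ^ 2 + z₂ * z₃))) := by
  obtain ⟨u, hu, hdet⟩ := exists_det_pencil_eq_weightProd m z₀ z₁ z₂ z₃
  rw [← hu]
  constructor
  · rintro k rfl
    exact hdet.trans (weightProd_two_mul z₀ u k)
  · rintro k rfl
    exact hdet.trans (weightProd_two_mul_add_one z₀ u k)
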